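/- Let d ≥ 2, let s be a positive integer, β > −d−s, λ_0,…,λ_{s−1} > 0, and assume given the orthonormal spanning families (Y_ℓ^m) of solid harmonics. Let f : ℝ^d × ℝ → ℝ be s-times continuously differentiable. Then for every n ∈ ℕ, every x ∈ ℝ^d and every t ∈ [0,1]: proj_n^{β,−s} f(x,t) = Σ_{m=0}^{s−1} ((t−1)^m/m!) · Proj_{n−m}[∂_t^m f(·,1)](x) + (−1)^s ∫_t^1 ((v−t)^{s−1}/(s−1)!) · proj_{n−s}^{β+s,0}(∂_t^s f)(x,v) dv, where ∂_t^m f(·,1) denotes the function ξ ↦ ∂_t^m f(ξ,1) on S^{d−1}, and projections with negative degree index are 0. -/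

import Mathlib

open MeasureTheory Finset

noncomputable section

/-- Pochhammer symbol `(x)_k`. -/
def poch (x : ℝ) (k : ℕ) : ℝ := (ascPochhammer ℝ k).eval x

/-- Jacobi polynomial `P_n^{(a,b)}` for real parameters. -/
def jacobiP (a b : ℝ) (n : ℕ) (t : ℝ) : ℝ :=
  (poch (a + 1) n / (n.factorial : ℝ)) *
    ∑ k ∈ Finset.range (n + 1),
      poch (-(n : ℝ)) k * poch ((n : ℝ) + a + b + 1) k /
        ((k.factorial : ℝ) * poch (a + 1) k) * ((1 - t) / 2) ^ k

/-- Normalizing constant `A_n^{(a,b)}`. -/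
def jacobiA (a b : ℝ) (n : ℕ) : ℝ := 2 ^ n / poch ((n : ℝ) + a + b + 1) n

/-- Normalized Jacobi polynomial `P̂_n^{(a,b)}`. -/
def jacobiPhat (a b : ℝ) (n : ℕ) (t : ℝ) : ℝ := jacobiA a b n * jacobiP a b n t

/-- The polynomials `J_n^{(a-s,b-s)}` (defined from the parameters `a, b > -1`). -/
def jacobiJ (a b : ℝ) (s n : ℕ) (t : ℝ) : ℝ :=
  if n < s then (1 + t) ^ n / (n.factorial : ℝ)
  else ∫ u in (-1 : ℝ)..t, (t - u) ^ (s - 1) / ((s - 1).factorial : ℝ) * jacobiPhat a b (n - s) u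

/-- Normalization constant `c_{a,b}`. -/
def cconst (a b : ℝ) : ℝ := Real.Gamma (a + b + 2) / (Real.Gamma (a + 1) * Real.Gamma (b + 1))

/-- Norm square `h_n^{(a,b)}`. -/
def hJac (a b : ℝ) (n : ℕ) : ℝ :=
  poch (a + 1) n * poch (b + 1) n * (a + b + n + 1) /
    ((n.factorial : ℝ) * poch (a + b + 2) n * (a + b + 2 * n + 1))

/-- Norm square `ĥ_n^{(a,b)}`. -/
def hHat (a b : ℝ) (n : ℕ) : ℝ := 2 ^ (a + b + 1) / cconst a b * (jacobiA a b n) ^ 2 * hJac a b n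

/-- The polynomials `J_n^{(a,-s)}`, built from `P̂^{(a+s,0)}`. -/
def jacobiJneg (a : ℝ) (s n : ℕ) (t : ℝ) : ℝ := jacobiJ (a + s) 0 s n t

/-- Euclidean space `ℝ^d`. -/
abbrev Euc (d : ℕ) : Type := EuclideanSpace ℝ (Fin d)

/-- The surface measure on the unit sphere `S^{d-1} ⊂ ℝ^d`. -/
def sphMeasure (d : ℕ) : Measure (Metric.sphere (0 : Euc d) 1) :=
  (volume : Measure (Euc d)).toSphere

/-- Surface area `ω_d` of the unit sphere. -/
def omegaS (d : ℕ) : ℝ := (sphMeasure d Set.univ).toReal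

/-- Integral over the sphere of a function defined on `ℝ^d`. -/
def sphInt (d : ℕ) (g : Euc d → ℝ) : ℝ := ∫ ξ, g (ξ : Euc d) ∂(sphMeasure d)

/-- The conic surface `V_0^{d+1} = {(x,t) : ‖x‖ = t, 0 ≤ t ≤ 1}` as a subset of `ℝ^d × ℝ`. -/
def coneSet (d : ℕ) : Set (Euc d × ℝ) := {p | ‖p.1‖ = p.2 ∧ 0 ≤ p.2 ∧ p.2 ≤ 1}

/-- The integral `∫_{V_0^{d+1}} f dm`. -/
def coneInt (d : ℕ) (f : Euc d × ℝ → ℝ) : ℝ :=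
  ∫ t in (0 : ℝ)..1, t ^ (d - 1) * sphInt d (fun ξ => f (t • ξ, t))

/-- `∂_t^k f`: the `k`-th partial derivative in the last variable `t`, with `x` fixed. -/
def pdT (k : ℕ) (f : Euc d × ℝ → ℝ) : Euc d × ℝ → ℝ :=
  fun p => iteratedDeriv k (fun τ => f (p.1, τ)) p.2

/-- A solid harmonic of degree `m` on `ℝ^d`: a homogeneous polynomial annihilated by the
Laplacian. -/
def IsSolidHarmonic (d m : ℕ) (Y : Euc d → ℝ) : Prop :=
  ∃ q : MvPolynomial (Fin d) ℝ, q.IsHomogeneous m ∧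
    (∑ i : Fin d, MvPolynomial.pderiv i (MvPolynomial.pderiv i q)) = 0 ∧
    ∀ x : Euc d, Y x = MvPolynomial.eval (fun i => x i) q

/-- The ordinary inner product `⟨f,g⟩_{β,γ}` on the conic surface. -/
def coneInner (d : ℕ) (β γ : ℝ) (f g : Euc d × ℝ → ℝ) : ℝ :=
  cconst (β + d - 1) γ / omegaS d *
    coneInt d (fun p => f p * g p * p.2 ^ β * (1 - p.2) ^ γ)

/-- The (classical) Jacobi basis polynomial `S_{m,Y}^{n,(β,γ)}` on the cone. -/
def coneS (d : ℕ) (β γ : ℝ) (n m : ℕ) (Y : Euc d → ℝ) : Euc d × ℝ → ℝ :=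
  fun p => jacobiP (2 * m + β + d - 1) γ (n - m) (1 - 2 * p.2) * Y p.1

/-- The norm square `h_{n,m}^{β,γ}`. -/
def coneH (d : ℕ) (β γ : ℝ) (n m : ℕ) : ℝ :=
  poch (β + d) (2 * m) / poch (β + γ + d + 1) (2 * m) * hJac (2 * m + β + d - 1) γ (n - m)

/-- The orthogonal projection `proj_n^{β,γ} f` built from an orthonormal spanning family of
solid harmonics. -/
def coneProj (d : ℕ) (N : ℕ → ℕ) (Y : (m : ℕ) → Fin (N m) → Euc d → ℝ) (β γ : ℝ) (n : ℕ)
    (f : Euc d × ℝ → ℝ) : Euc d × ℝ → ℝ :=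
  fun p => ∑ m ∈ Finset.range (n + 1), ∑ ℓ : Fin (N m),
    coneInner d β γ f (coneS d β γ n m (Y m ℓ)) / coneH d β γ n m * coneS d β γ n m (Y m ℓ) p

/-- The Sobolev inner product `⟨f,g⟩_{β,-s}` on the conic surface. -/
def coneSobInner (d : ℕ) (β : ℝ) (s : ℕ) (lam : ℕ → ℝ) (f g : Euc d × ℝ → ℝ) : ℝ :=
  (1 / omegaS d) * coneInt d (fun p => pdT s f p * pdT s g p * p.2 ^ (β + s)) +
    ∑ k ∈ Finset.range s, lam k / omegaS d *
      sphInt d (fun ξ => pdT k f (ξ, 1) * pdT k g (ξ, 1))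

/-- The Sobolev basis polynomial `S_{m,Y}^{n,(β,-s)}` on the cone. -/
def coneSS (d : ℕ) (β : ℝ) (s n m : ℕ) (Y : Euc d → ℝ) : Euc d × ℝ → ℝ :=
  fun p => jacobiJneg (2 * m + β + d - 1) s (n - m) (1 - 2 * p.2) * Y p.1

/-- The Sobolev norm square `h_{m,n}^{(β,-s)}`. -/
def coneSobH (d : ℕ) (β : ℝ) (s : ℕ) (lam : ℕ → ℝ) (n m : ℕ) : ℝ :=
  if n - m < s then 2 ^ (2 * (n - m)) * lam (n - m)
  else 2 ^ ((s : ℝ) - β - 2 * m - d) * hHat ((s : ℝ) + 2 * m + β + d - 1) 0 (n - m - s)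

/-- The Sobolev orthogonal projection `proj_n^{β,-s} f`. -/
def coneSobProj (d : ℕ) (N : ℕ → ℕ) (Y : (m : ℕ) → Fin (N m) → Euc d → ℝ) (β : ℝ) (s : ℕ)
    (lam : ℕ → ℝ) (n : ℕ) (f : Euc d × ℝ → ℝ) : Euc d × ℝ → ℝ :=
  fun p => ∑ m ∈ Finset.range (n + 1), ∑ ℓ : Fin (N m),
    coneSobInner d β s lam f (coneSS d β s n m (Y m ℓ)) / coneSobH d β s lam n m *
      coneSS d β s n m (Y m ℓ) p

/-- The spherical harmonic projection `Proj_k[g]` built from the orthonormal spanning family. -/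
def sphProj (d : ℕ) (N : ℕ → ℕ) (Y : (m : ℕ) → Fin (N m) → Euc d → ℝ) (k : ℕ)
    (g : Euc d → ℝ) : Euc d → ℝ :=
  fun x => ∑ ℓ : Fin (N k), (1 / omegaS d) * sphInt d (fun ξ => g ξ * Y k ℓ ξ) * Y k ℓ x

/-- Hypotheses: `(Y_ℓ^m)` is an orthonormal spanning family of solid harmonics. -/
def IsONBasisFamily (d : ℕ) (N : ℕ → ℕ) (Y : (m : ℕ) → Fin (N m) → Euc d → ℝ) : Prop :=
  (∀ m ℓ, IsSolidHarmonic d m (Y m ℓ)) ∧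
  (∀ m (ℓ ℓ' : Fin (N m)),
    (1 / omegaS d) * sphInt d (fun ξ => Y m ℓ ξ * Y m ℓ' ξ) = if ℓ = ℓ' then 1 else 0) ∧
  (∀ m (Z : Euc d → ℝ), IsSolidHarmonic d m Z →
    ∃ c : Fin (N m) → ℝ, ∀ x, Z x = ∑ ℓ : Fin (N m), c ℓ * Y m ℓ x)



lemma expand_int {g : ℝ → ℝ} (hg : Continuous g) (e : ℕ) (c z : ℝ) :
    (∫ u in c..z, (z - u) ^ e * g u)
      = ∑ i ∈ Finset.range (e+1), (e.choose i : ℝ) * z ^ i *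
          ∫ u in c..z, (-u) ^ (e - i) * g u := by
  have h : ∀ u : ℝ, (z - u) ^ e * g u
      = ∑ i ∈ Finset.range (e+1), (e.choose i : ℝ) * z ^ i * ((-u) ^ (e - i) * g u) := by
    intro u
    rw [sub_eq_add_neg, add_pow, Finset.sum_mul]
    exact Finset.sum_congr rfl fun i _ => by ring
  simp_rw [h]
  rw [intervalIntegral.integral_finset_sum]
  · exact Finset.sum_congr rfl fun i _ => by rw [intervalIntegral.integral_const_mul]
  · intro i _
    exact Continuous.intervalIntegrable (by fun_prop) _ _

lemma hasDerivAt_cauchy {g : ℝ → ℝ} (hg : Continuous g) (r : ℕ) (c y : ℝ) :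
    HasDerivAt (fun z => ∫ u in c..z, (z - u) ^ (r+1) * g u)
      (((r:ℝ)+1) * ∫ u in c..y, (y - u) ^ r * g u) y := by
  have hG : ∀ j : ℕ, HasDerivAt (fun z => ∫ u in c..z, (-u) ^ j * g u) ((-y) ^ j * g y) y := by
    intro j
    exact intervalIntegral.integral_hasDerivAt_right
      (Continuous.intervalIntegrable (by fun_prop) _ _)
      (Continuous.stronglyMeasurableAtFilter (by fun_prop) _ _)
      (Continuous.continuousAt (by fun_prop))
  have key : HasDerivAt (fun z => ∑ i ∈ Finset.range (r+2), ((r+1).choose i : ℝ) * z ^ i *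
      ∫ u in c..z, (-u) ^ (r+1 - i) * g u)
      (∑ i ∈ Finset.range (r+2), (((r+1).choose i : ℝ) * ((i:ℝ) * y ^ (i-1)) *
          (∫ u in c..y, (-u) ^ (r+1 - i) * g u)
        + ((r+1).choose i : ℝ) * y ^ i * ((-y) ^ (r+1 - i) * g y))) y := by
    apply HasDerivAt.fun_sum
    intro i _
    have h1 : HasDerivAt (fun z : ℝ => ((r+1).choose i : ℝ) * z ^ i)
        (((r+1).choose i : ℝ) * ((i:ℝ) * y ^ (i-1))) y := (hasDerivAt_pow i y).const_mul _
    simpa [mul_assoc, Pi.mul_def] using h1.mul (hG (r+1-i))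
  have hfun : (fun z => ∫ u in c..z, (z - u) ^ (r+1) * g u)
      = fun z => ∑ i ∈ Finset.range (r+2), ((r+1).choose i : ℝ) * z ^ i *
          ∫ u in c..z, (-u) ^ (r+1 - i) * g u := funext fun z => expand_int hg (r+1) c z
  rw [hfun]
  convert key using 1
  rw [Finset.sum_add_distrib]
  have h2 : ∑ i ∈ Finset.range (r+2), ((r+1).choose i : ℝ) * y ^ i * ((-y) ^ (r+1 - i) * g y)
      = 0 := by
    have := expand_int hg (r+1) c y -- not needed; direct
    have hb : ∑ i ∈ Finset.range (r+2), y ^ i * (-y) ^ (r+1-i) * (((r+1).choose i : ℝ)) = (y + -y)^(r+1) := (add_pow y (-y) (r+1)).symm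
    have : ∑ i ∈ Finset.range (r+2), ((r+1).choose i : ℝ) * y ^ i * ((-y) ^ (r+1 - i) * g y)
        = (∑ i ∈ Finset.range (r+2), y ^ i * (-y) ^ (r+1-i) * (((r+1).choose i : ℝ))) * g y := by
      rw [Finset.sum_mul]; exact Finset.sum_congr rfl fun i _ => by ring
    rw [this, hb]
    simp
  rw [h2, add_zero]
  have h1 : ∑ i ∈ Finset.range (r+2), ((r+1).choose i : ℝ) * ((i:ℝ) * y ^ (i-1)) *
        (∫ u in c..y, (-u) ^ (r+1 - i) * g u)
      = ((r:ℝ)+1) * ∑ i ∈ Finset.range (r+1), ((r).choose i : ℝ) * y ^ i *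
        (∫ u in c..y, (-u) ^ (r - i) * g u) := by
    rw [Finset.sum_range_succ']
    simp only [Nat.cast_zero, zero_mul, mul_zero, zero_add, add_zero]
    rw [Finset.mul_sum]
    refine Finset.sum_congr rfl fun i _ => ?_
    have hc : ((r+1).choose (i+1) : ℝ) * ((i:ℝ)+1) = ((r:ℝ)+1) * (r.choose i : ℝ) := by
      exact_mod_cast congrArg (Nat.cast : ℕ → ℝ) (Nat.add_one_mul_choose_eq r i).symm
    simp only [Nat.succ_sub_succ, Nat.succ_sub_one, Nat.sub_zero]
    push_cast
    linear_combination y ^ i * (∫ u in c..y, (-u) ^ (r - i) * g u) * hc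
  rw [expand_int hg r c y, h1]

lemma hasDerivAt_aff (τ : ℝ) : HasDerivAt (fun τ : ℝ => 1 - 2*τ) (-2) τ := by
  simpa using ((hasDerivAt_id τ).const_mul (2:ℝ)).const_sub 1

lemma iterDerivPowAux : ∀ (j k : ℕ) (cc : ℝ),
    iteratedDeriv j (fun τ : ℝ => cc * (τ - 1)^k)
      = fun τ => cc * (k.descFactorial j : ℝ) * (τ - 1)^(k - j) := by
  intro j
  induction j with
  | zero => intro k cc; funext τ; simp
  | succ j ih =>
    intro k cc
    rw [iteratedDeriv_succ']
    have hd : deriv (fun τ : ℝ => cc * (τ - 1)^k) = fun τ => (cc * k) * (τ - 1)^(k-1) := by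
      funext τ
      have h : HasDerivAt (fun τ : ℝ => cc * (τ-1)^k) (cc * ((k:ℝ) * (τ-1)^(k-1))) τ := by
        have h := ((hasDerivAt_id τ).sub_const 1).pow k
        simpa using h.const_mul cc
      rw [h.deriv]; ring
    rw [hd, ih (k-1) (cc * k)]
    funext τ
    have h1 : (k.descFactorial (j+1) : ℝ) = (k : ℝ) * ((k-1).descFactorial j : ℝ) := by
      cases k with
      | zero => simp
      | succ k => rw [Nat.succ_descFactorial_succ]; push_cast; ring
    have h2 : k - 1 - j = k - (j+1) := by omega
    rw [h2, h1]; ring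

lemma hasDerivAt_Jint {g : ℝ → ℝ} (hg : Continuous g) (e : ℕ) (cc τ : ℝ) :
    HasDerivAt (fun τ : ℝ => cc * ∫ u in (-1:ℝ)..(1 - 2*τ),
        (1 - 2*τ - u) ^ (e+1) / ((e+1).factorial : ℝ) * g u)
      ((cc * (-2)) * ∫ u in (-1:ℝ)..(1 - 2*τ),
        (1 - 2*τ - u) ^ e / (e.factorial : ℝ) * g u) τ := by
  have h1 := hasDerivAt_cauchy hg e (-1) (1 - 2*τ)
  have h2 := HasDerivAt.comp τ h1 (hasDerivAt_aff τ)
  have h3 := h2.const_mul (cc / ((e+1).factorial : ℝ))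
  have hfun : (fun τ : ℝ => cc / ((e+1).factorial : ℝ) *
        ((fun z => ∫ u in (-1:ℝ)..z, (z - u) ^ (e+1) * g u) ∘ fun τ : ℝ => 1 - 2*τ) τ)
      = fun τ : ℝ => cc * ∫ u in (-1:ℝ)..(1 - 2*τ),
          (1 - 2*τ - u) ^ (e+1) / ((e+1).factorial : ℝ) * g u := by
    funext σ
    show cc / ((e+1).factorial : ℝ) * ∫ u in (-1:ℝ)..(1-2*σ), ((1-2*σ) - u) ^ (e+1) * g u = _
    rw [show (fun u : ℝ => (1 - 2*σ - u) ^ (e+1) / ((e+1).factorial : ℝ) * g u)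
        = fun u : ℝ => (((e+1).factorial : ℝ))⁻¹ * ((1 - 2*σ - u) ^ (e+1) * g u) from
          funext fun u => by ring, intervalIntegral.integral_const_mul]
    ring
  rw [hfun] at h3
  refine h3.congr_deriv ?_
  symm
  rw [show (fun u : ℝ => (1 - 2*τ - u) ^ e / (e.factorial : ℝ) * g u)
      = fun u : ℝ => ((e.factorial : ℝ))⁻¹ * ((1 - 2*τ - u) ^ e * g u) from
        funext fun u => by ring, intervalIntegral.integral_const_mul]
  have hfac : ((e+1).factorial : ℝ) = ((e:ℝ)+1) * (e.factorial : ℝ) := by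
    rw [Nat.factorial_succ]; push_cast; ring
  have hne : (e.factorial : ℝ) ≠ 0 := Nat.cast_ne_zero.mpr e.factorial_ne_zero
  have hne1 : ((e:ℝ)+1) ≠ 0 := by positivity
  rw [hfac]
  field_simp [hfac]

lemma iter_deriv_J {g : ℝ → ℝ} (hg : Continuous g) : ∀ (j : ℕ) (cc : ℝ) (r : ℕ),
    iteratedDeriv j (fun τ : ℝ => cc * ∫ u in (-1:ℝ)..(1 - 2*τ),
        (1 - 2*τ - u) ^ (j + r) / ((j + r).factorial : ℝ) * g u)
      = fun τ => cc * (-2)^j * ∫ u in (-1:ℝ)..(1 - 2*τ),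
          (1 - 2*τ - u) ^ r / (r.factorial : ℝ) * g u := by
  intro j
  induction j with
  | zero => intro cc r; funext τ; simp
  | succ j ih =>
    intro cc r
    rw [iteratedDeriv_succ']
    have hd : deriv (fun τ : ℝ => cc * ∫ u in (-1:ℝ)..(1 - 2*τ),
          (1 - 2*τ - u) ^ (j + 1 + r) / ((j + 1 + r).factorial : ℝ) * g u)
        = fun τ => (cc * (-2)) * ∫ u in (-1:ℝ)..(1 - 2*τ),
            (1 - 2*τ - u) ^ (j + r) / ((j + r).factorial : ℝ) * g u := by
      funext τ
      have := hasDerivAt_Jint hg (j + r) cc τ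
      rw [show (j + r) + 1 = j + 1 + r by omega] at this
      exact this.deriv
    rw [hd, ih (cc * (-2)) r]
    funext τ; ring

lemma iter_deriv_J_top {g : ℝ → ℝ} (hg : Continuous g) (s' : ℕ) (cc : ℝ) :
    iteratedDeriv (s'+1) (fun τ : ℝ => cc * ∫ u in (-1:ℝ)..(1 - 2*τ),
        (1 - 2*τ - u) ^ s' / (s'.factorial : ℝ) * g u)
      = fun τ => cc * (-2)^(s'+1) * g (1 - 2*τ) := by
  rw [iteratedDeriv_succ]
  have h0 : iteratedDeriv s' (fun τ : ℝ => cc * ∫ u in (-1:ℝ)..(1 - 2*τ),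
        (1 - 2*τ - u) ^ s' / (s'.factorial : ℝ) * g u)
      = fun τ => cc * (-2)^s' * ∫ u in (-1:ℝ)..(1 - 2*τ), g u := by
    have := iter_deriv_J hg s' cc 0
    simp only [Nat.add_zero, pow_zero, Nat.factorial_zero, Nat.cast_one, div_one, one_mul]
      at this
    exact this
  rw [h0]
  funext τ
  have h1 : HasDerivAt (fun z : ℝ => ∫ u in (-1:ℝ)..z, g u) (g (1 - 2*τ)) (1 - 2*τ) :=
    intervalIntegral.integral_hasDerivAt_right (hg.intervalIntegrable _ _)
      (hg.stronglyMeasurableAtFilter _ _) hg.continuousAt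
  have h2 := (HasDerivAt.comp τ h1 (hasDerivAt_aff τ)).const_mul (cc * (-2)^s')
  have h3 : HasDerivAt (fun τ : ℝ => cc * (-2)^s' * ∫ u in (-1:ℝ)..(1 - 2*τ), g u)
      (cc * (-2)^s' * (g (1 - 2*τ) * -2)) τ := by simpa [Function.comp] using h2
  rw [h3.deriv]; ring

lemma poch_succ (x : ℝ) (k : ℕ) : poch x (k+1) = poch x k * (x + k) := by
  unfold poch; rw [ascPochhammer_succ_right]; simp

lemma poch_pos {x : ℝ} (hx : 0 < x) (k : ℕ) : 0 < poch x k := by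
  induction k with
  | zero => simp [poch]
  | succ k ih =>
    rw [poch_succ]
    exact mul_pos ih (add_pos_of_pos_of_nonneg hx (Nat.cast_nonneg k))

lemma poch_succ_left (x : ℝ) (k : ℕ) : poch x (k+1) = x * poch (x+1) k := by
  unfold poch; rw [ascPochhammer_succ_left]; simp [Polynomial.eval_comp]

lemma poch_shift (x : ℝ) (k : ℕ) : x * poch (x+1) k = poch x k * (x + k) := by
  rw [← poch_succ_left, poch_succ]

lemma cconst_zero {x : ℝ} (hx : 0 < x + 1) : cconst x 0 = x + 1 := by
  unfold cconst
  rw [show x + 0 + 2 = (x+1) + 1 by ring, Real.Gamma_add_one (ne_of_gt hx), show (0:ℝ)+1 = 1 by norm_num,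
    Real.Gamma_one, mul_one, mul_div_assoc, div_self (Real.Gamma_pos_of_pos hx).ne', mul_one]

lemma continuous_jacobiP (a b : ℝ) (n : ℕ) : Continuous (jacobiP a b n) := by
  unfold jacobiP; fun_prop

lemma continuous_jacobiPhat (a b : ℝ) (n : ℕ) : Continuous (jacobiPhat a b n) := by
  unfold jacobiPhat; exact continuous_const.mul (continuous_jacobiP a b n)

lemma sphInt_congr {d : ℕ} {g g' : Euc d → ℝ} (h : ∀ z, g z = g' z) :
    sphInt d g = sphInt d g' := by rw [funext h]

lemma sphInt_const_mul (d : ℕ) (c : ℝ) (g : Euc d → ℝ) :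
    sphInt d (fun ξ => c * g ξ) = c * sphInt d g := by
  unfold sphInt; exact MeasureTheory.integral_const_mul c _

lemma sphInt_zero (d : ℕ) : sphInt d (fun _ => 0) = 0 := by
  unfold sphInt; simp

lemma coneInt_congr {d : ℕ} {f g : Euc d × ℝ → ℝ} (h : ∀ p, f p = g p) :
    coneInt d f = coneInt d g := by rw [funext h]

lemma coneInt_const_mul (d : ℕ) (c : ℝ) (f : Euc d × ℝ → ℝ) :
    coneInt d (fun p => c * f p) = c * coneInt d f := by
  unfold coneInt
  rw [← intervalIntegral.integral_const_mul]
  exact intervalIntegral.integral_congr fun τ _ => by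
    rw [sphInt_const_mul]; ring

lemma coneInt_zero (d : ℕ) : coneInt d (fun _ => 0) = 0 := by
  have := coneInt_const_mul d 0 (fun _ => (0:ℝ))
  simpa using this

lemma int_sub_half (H : ℝ → ℝ) (t : ℝ) :
    (∫ u in (-1:ℝ)..(1 - 2*t), H u) = 2 * ∫ v in t..(1:ℝ), H (1 - 2*v) := by
  have h := intervalIntegral.integral_comp_mul_add (a := (1:ℝ)) (b := t) (f := H)
    (c := (-2:ℝ)) (by norm_num) 1
  rw [show (-2:ℝ)*1+1 = -1 by norm_num, show (-2:ℝ)*t+1 = 1-2*t by ring] at h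
  rw [show (fun x : ℝ => H (-2*x+1)) = fun x => H (1-2*x) from
    funext fun x => congrArg H (by ring)] at h
  rw [intervalIntegral.integral_symm t 1] at h
  rw [smul_eq_mul] at h
  linarith

/-- integral representation of the Sobolev projection `proj_n^{β,-s}`. -/
theorem coneSobProj_integral_repr (d : ℕ) (hd : 2 ≤ d) (s : ℕ) (hs : 1 ≤ s) (β : ℝ)
    (hβ : -(d : ℝ) - s < β) (lam : ℕ → ℝ) (hlam : ∀ k, k ≤ s - 1 → 0 < lam k)
    (N : ℕ → ℕ) (Y : (m : ℕ) → Fin (N m) → Euc d → ℝ) (hY : IsONBasisFamily d N Y)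
    (f : Euc d × ℝ → ℝ) (hf : ContDiff ℝ s f)
    (n : ℕ) (x : Euc d) (t : ℝ) (ht : t ∈ Set.Icc (0 : ℝ) 1) :
    coneSobProj d N Y β s lam n f (x, t)
      = (∑ m ∈ Finset.range s, (t - 1) ^ m / (m.factorial : ℝ) *
          (if n < m then 0
            else sphProj d N Y (n - m) (fun ξ => pdT m f (ξ, 1)) x))
        + (-1 : ℝ) ^ s * ∫ v in t..(1 : ℝ), (v - t) ^ (s - 1) / ((s - 1).factorial : ℝ) *
            (if n < s then 0
              else coneProj d N Y (β + s) 0 (n - s) (pdT s f) (x, v)) := by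
  obtain ⟨s', rfl⟩ : ∃ s', s = s' + 1 := ⟨s - 1, by omega⟩
  unfold coneSobProj
  rw [← Finset.sum_filter_add_sum_filter_not (Finset.range (n+1)) (fun m => n - m < s'+1)]
  congr 1
  · -- case A : boundary terms
    have hA : ∀ m ∈ (Finset.range (n+1)).filter (fun m => n - m < s'+1),
        (∑ ℓ : Fin (N m), coneSobInner d β (s'+1) lam f (coneSS d β (s'+1) n m (Y m ℓ)) /
          coneSobH d β (s'+1) lam n m * coneSS d β (s'+1) n m (Y m ℓ) (x, t))
        = (t-1)^(n-m) / ((n-m).factorial : ℝ) *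
            sphProj d N Y m (fun ξ => pdT (n-m) f (ξ, 1)) x := by
      intro m hm
      rw [Finset.mem_filter, Finset.mem_range] at hm
      obtain ⟨hmn, hk⟩ := hm
      have hSSfun : ∀ (ℓ : Fin (N m)) (z : Euc d),
          (fun τ => coneSS d β (s'+1) n m (Y m ℓ) (z, τ))
          = fun τ => (Y m ℓ z * (-2)^(n-m) / ((n-m).factorial : ℝ)) * (τ - 1)^(n-m) := by
        intro ℓ z; funext τ
        simp only [coneSS, jacobiJneg, jacobiJ, if_pos hk]
        rw [show (1:ℝ) + (1 - 2*τ) = -2 * (τ - 1) by ring, mul_pow]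
        ring
      have hpd : ∀ (j : ℕ) (ℓ : Fin (N m)) (p : Euc d × ℝ),
          pdT j (coneSS d β (s'+1) n m (Y m ℓ)) p
          = (Y m ℓ p.1 * (-2)^(n-m) / ((n-m).factorial : ℝ)) *
              ((n-m).descFactorial j : ℝ) * (p.2 - 1)^(n-m-j) := by
        intro j ℓ p
        show iteratedDeriv j (fun τ => coneSS d β (s'+1) n m (Y m ℓ) (p.1, τ)) p.2 = _
        rw [hSSfun ℓ p.1, iterDerivPowAux]
      have hInner : ∀ ℓ : Fin (N m),
          coneSobInner d β (s'+1) lam f (coneSS d β (s'+1) n m (Y m ℓ))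
          = lam (n-m) / omegaS d *
              ((-2)^(n-m) * sphInt d (fun ξ => pdT (n-m) f (ξ, 1) * Y m ℓ ξ)) := by
        intro ℓ
        unfold coneSobInner
        have h1 : coneInt d (fun p => pdT (s'+1) f p *
              pdT (s'+1) (coneSS d β (s'+1) n m (Y m ℓ)) p * p.2 ^ (β + ((s'+1:ℕ):ℝ)))
            = coneInt d (fun _ => 0) := coneInt_congr fun p => by
          rw [hpd, Nat.descFactorial_eq_zero_iff_lt.mpr hk]
          simp
        rw [h1, coneInt_zero, mul_zero, zero_add]
        rw [Finset.sum_eq_single_of_mem (n-m) (Finset.mem_range.mpr hk)]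
        · congr 1
          rw [← sphInt_const_mul]
          apply sphInt_congr
          intro z
          rw [hpd]
          simp only [Nat.sub_self, pow_zero, Nat.descFactorial_self]
          have : ((n-m).factorial : ℝ) ≠ 0 := Nat.cast_ne_zero.mpr (n-m).factorial_ne_zero
          field_simp
        · intro j _ hne
          have h0 : sphInt d
              (fun ξ => pdT j f (ξ, 1) * pdT j (coneSS d β (s'+1) n m (Y m ℓ)) (ξ, 1)) = 0 := by
            rw [sphInt_congr (g' := fun _ => 0), sphInt_zero]
            intro z
            rw [hpd]
            rcases lt_or_gt_of_ne hne with h | h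
            · simp [zero_pow (by omega : n - m - j ≠ 0)]
            · simp [Nat.descFactorial_eq_zero_iff_lt.mpr h]
          rw [h0, mul_zero]
      have hH : coneSobH d β (s'+1) lam n m = 2^(2*(n-m)) * lam (n-m) := by
        unfold coneSobH; rw [if_pos hk]
      have hlamk : lam (n-m) ≠ 0 := (hlam (n-m) (by omega)).ne'
      unfold sphProj
      rw [Finset.mul_sum]
      apply Finset.sum_congr rfl
      intro ℓ _
      rw [hInner ℓ, hH]
      have hval : coneSS d β (s'+1) n m (Y m ℓ) (x, t)
          = (Y m ℓ x * (-2)^(n-m) / ((n-m).factorial : ℝ)) * (t - 1)^(n-m) :=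
        congrFun (hSSfun ℓ x) t
      rw [hval]
      rw [div_eq_mul_inv (lam (n-m)), one_div]
      generalize (omegaS d)⁻¹ = w
      have hfac : ((n-m).factorial : ℝ) ≠ 0 := Nat.cast_ne_zero.mpr (n-m).factorial_ne_zero
      have h2 : ((-2:ℝ))^(n-m) * (-2)^(n-m) = 2^(2*(n-m)) := by
        rw [← mul_pow, pow_mul]; norm_num
      have h2ne : ((2:ℝ))^(2*(n-m)) ≠ 0 := by positivity
      field_simp
      rw [← h2]
      ring
    rw [Finset.sum_congr rfl hA]
    rw [← Finset.sum_filter_add_sum_filter_not (Finset.range (s'+1)) (fun j => j ≤ n)]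
    have hz : (∑ j ∈ (Finset.range (s'+1)).filter (fun j => ¬ j ≤ n),
        (t-1)^j/(j.factorial:ℝ) * (if n < j then 0
          else sphProj d N Y (n-j) (fun ξ => pdT j f (ξ,1)) x)) = 0 :=
      Finset.sum_eq_zero fun j hj => by
        rw [Finset.mem_filter] at hj
        rw [if_pos (by omega), mul_zero]
    rw [hz, add_zero]
    refine Finset.sum_bij' (fun m _ => n - m) (fun j _ => n - j) ?_ ?_ ?_ ?_ ?_
    · intro a ha; simp only [Finset.mem_filter, Finset.mem_range] at ha ⊢; omega
    · intro a ha; simp only [Finset.mem_filter, Finset.mem_range] at ha ⊢; omega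
    · intro a ha; simp only [Finset.mem_filter, Finset.mem_range] at ha ⊢; omega
    · intro a ha; simp only [Finset.mem_filter, Finset.mem_range] at ha ⊢; omega
    · intro a ha
      simp only [Finset.mem_filter, Finset.mem_range] at ha
      rw [if_neg (by omega), show n - (n - a) = a from by omega]
  · -- case B : integral term
    rw [show (Finset.range (n+1)).filter (fun m => ¬ n - m < s'+1) = Finset.range (n - s')
      from by ext a; simp only [Finset.mem_filter, Finset.mem_range]; omega]
    by_cases hn : n < s'+1
    · rw [show n - s' = 0 from by omega]
      simp only [hn, if_true, Finset.range_zero, Finset.sum_empty, mul_zero,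
        intervalIntegral.integral_zero, Nat.add_sub_cancel]
    · simp only [hn, if_false, Nat.add_sub_cancel]
      have hB : ∀ m, m + (s'+1) ≤ n → ∀ ℓ : Fin (N m),
          coneSobInner d β (s'+1) lam f (coneSS d β (s'+1) n m (Y m ℓ)) /
            coneSobH d β (s'+1) lam n m * coneSS d β (s'+1) n m (Y m ℓ) (x, t)
          = (-1:ℝ)^(s'+1) * ∫ v in t..(1:ℝ), (v-t)^s'/(s'.factorial:ℝ) *
              (coneInner d (β+((s'+1:ℕ):ℝ)) 0 (pdT (s'+1) f)
                  (coneS d (β+((s'+1:ℕ):ℝ)) 0 (n-(s'+1)) m (Y m ℓ)) /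
                coneH d (β+((s'+1:ℕ):ℝ)) 0 (n-(s'+1)) m *
                coneS d (β+((s'+1:ℕ):ℝ)) 0 (n-(s'+1)) m (Y m ℓ) (x, v)) := by
        intro m hms ℓ
        have hk : ¬ (n - m < s'+1) := by omega
        obtain ⟨A', hA'def⟩ : ∃ y : ℝ, y = 2 * (m:ℝ) + β + (d:ℝ) - 1 + ((s'+1 : ℕ) : ℝ) := ⟨_, rfl⟩
        obtain ⟨q, hqdef⟩ : ∃ u : ℕ, u = n - m - (s'+1) := ⟨_, rfl⟩
        have hG : Continuous (jacobiPhat A' 0 q) := continuous_jacobiPhat A' 0 q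
        have hSSfun : ∀ z : Euc d, (fun τ => coneSS d β (s'+1) n m (Y m ℓ) (z, τ))
            = fun τ => Y m ℓ z * ∫ u in (-1:ℝ)..(1 - 2*τ),
                (1 - 2*τ - u)^s' / (s'.factorial : ℝ) * jacobiPhat A' 0 q u := by
          intro z; funext τ
          simp only [coneSS, jacobiJneg, jacobiJ, if_neg hk, Nat.add_sub_cancel]
          rw [hA'def, hqdef]
          ring
        have hpdtop : ∀ p : Euc d × ℝ, pdT (s'+1) (coneSS d β (s'+1) n m (Y m ℓ)) p
            = Y m ℓ p.1 * (-2)^(s'+1) * jacobiPhat A' 0 q (1 - 2*p.2) := by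
          intro p
          show iteratedDeriv (s'+1) (fun τ => coneSS d β (s'+1) n m (Y m ℓ) (p.1, τ)) p.2 = _
          rw [hSSfun p.1, iter_deriv_J_top hG]
        have hpdlow : ∀ j, j < s'+1 → ∀ z : Euc d,
            pdT j (coneSS d β (s'+1) n m (Y m ℓ)) (z, 1) = 0 := by
          intro j hj z
          show iteratedDeriv j (fun τ => coneSS d β (s'+1) n m (Y m ℓ) (z, τ)) 1 = 0
          rw [hSSfun z]
          have h := iter_deriv_J hG j (Y m ℓ z) (s' - j)
          rw [show j + (s' - j) = s' from by omega] at h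
          rw [h]
          show Y m ℓ z * (-2) ^ j * (∫ (u : ℝ) in (-1:ℝ)..(1 - 2 * 1),
            (1 - 2 * 1 - u) ^ (s' - j) / ((s' - j).factorial:ℝ) * jacobiPhat A' 0 q u) = 0
          rw [show (1:ℝ) - 2*1 = -1 by norm_num]
          rw [intervalIntegral.integral_same, mul_zero]
        have hInner : coneSobInner d β (s'+1) lam f (coneSS d β (s'+1) n m (Y m ℓ))
            = (-2:ℝ)^(s'+1) * jacobiA A' 0 q / omegaS d * coneInt d
                (fun p => pdT (s'+1) f p *
                  coneS d (β+((s'+1:ℕ):ℝ)) 0 (n-(s'+1)) m (Y m ℓ) p *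
                  p.2 ^ (β+((s'+1:ℕ):ℝ)) * (1 - p.2) ^ (0:ℝ)) := by
          unfold coneSobInner
          have hsum : (∑ k ∈ Finset.range (s'+1), lam k / omegaS d *
              sphInt d (fun ξ => pdT k f (ξ,1) *
                pdT k (coneSS d β (s'+1) n m (Y m ℓ)) (ξ,1))) = 0 :=
            Finset.sum_eq_zero fun j hj => by
              rw [sphInt_congr (g' := fun _ => 0) (fun z => by
                rw [hpdlow j (Finset.mem_range.mp hj) z, mul_zero]), sphInt_zero, mul_zero]
          rw [hsum, add_zero]
          rw [coneInt_congr (g := fun p => ((-2:ℝ)^(s'+1) * jacobiA A' 0 q) *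
              (pdT (s'+1) f p * coneS d (β+((s'+1:ℕ):ℝ)) 0 (n-(s'+1)) m (Y m ℓ) p *
                p.2 ^ (β+((s'+1:ℕ):ℝ)) * (1 - p.2) ^ (0:ℝ))) (fun p => by
            rw [hpdtop p]
            simp only [coneS, jacobiPhat]
            rw [Real.rpow_zero,
              show 2*(m:ℝ) + (β+((s'+1:ℕ):ℝ)) + (d:ℝ) - 1 = A' from by rw [hA'def]; push_cast; ring,
              show n - (s'+1) - m = q from by rw [hqdef]; omega]
            ring), coneInt_const_mul]
          ring
        have hval : coneSS d β (s'+1) n m (Y m ℓ) (x, t)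
            = (2:ℝ)^(s'+1) * jacobiA A' 0 q *
                (∫ v in t..(1:ℝ), (v-t)^s'/(s'.factorial:ℝ) * jacobiP A' 0 q (1 - 2*v)) *
                Y m ℓ x := by
          have h0 : coneSS d β (s'+1) n m (Y m ℓ) (x, t)
              = Y m ℓ x * ∫ u in (-1:ℝ)..(1 - 2*t),
                  (1 - 2*t - u)^s' / (s'.factorial : ℝ) * jacobiPhat A' 0 q u :=
            congrFun (hSSfun x) t
          rw [h0, int_sub_half]
          rw [intervalIntegral.integral_congr (g := fun v => (2:ℝ)^s' * jacobiA A' 0 q *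
            ((v-t)^s'/(s'.factorial:ℝ) * jacobiP A' 0 q (1 - 2*v))) (fun v _ => by
              show (1 - 2*t - (1 - 2*v))^s' / (s'.factorial : ℝ) * jacobiPhat A' 0 q (1 - 2*v) = _
              rw [show (1 - 2*t - (1 - 2*v)) = 2 * (v - t) by ring, mul_pow]
              unfold jacobiPhat
              ring)]
          rw [intervalIntegral.integral_const_mul]
          ring
        have hHve : coneSobH d β (s'+1) lam n m
            = (2:ℝ)^(2*(s'+1)) / cconst A' 0 * (jacobiA A' 0 q)^2 * hJac A' 0 q := by
          unfold coneSobH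
          rw [if_neg hk]
          unfold hHat
          rw [show ((s'+1:ℕ):ℝ) + 2*(m:ℝ) + β + (d:ℝ) - 1 = A' from by rw [hA'def]; push_cast; ring]
          rw [show n - m - (s'+1) = q from by rw [hqdef]]
          have hcomb : (2:ℝ) ^ (((s'+1:ℕ):ℝ) - β - 2*(m:ℝ) - (d:ℝ)) * (2:ℝ) ^ (A' + 0 + 1)
              = (2:ℝ)^(2*(s'+1)) := by
            rw [← Real.rpow_natCast 2 (2*(s'+1)), ← Real.rpow_add two_pos]
            congr 1
            rw [hA'def]; push_cast; ring
          rw [show (2:ℝ) ^ (((s'+1:ℕ):ℝ) - β - 2*(m:ℝ) - (d:ℝ)) *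
              ((2:ℝ) ^ (A' + 0 + 1) / cconst A' 0 * jacobiA A' 0 q ^ 2 * hJac A' 0 q)
            = (2:ℝ) ^ (((s'+1:ℕ):ℝ) - β - 2*(m:ℝ) - (d:ℝ)) * (2:ℝ) ^ (A' + 0 + 1) / cconst A' 0
                * jacobiA A' 0 q ^ 2 * hJac A' 0 q from by ring, hcomb]
        -- positivity facts
        have hb' : -((d:ℝ)) - ((s'+1:ℕ):ℝ) < β := hβ
        have hm0 : (0:ℝ) ≤ (m:ℝ) := Nat.cast_nonneg m
        have hq0 : (0:ℝ) ≤ (q:ℝ) := Nat.cast_nonneg q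
        have hY0 : (0:ℝ) < β + ((s'+1:ℕ):ℝ) + (d:ℝ) := by linarith
        have hA'1 : (0:ℝ) < A' + 1 := by rw [hA'def]; linarith
        have hccA : cconst A' 0 = A' + 1 := cconst_zero hA'1
        have hccB : cconst (β + ((s'+1:ℕ):ℝ) + (d:ℝ) - 1) 0 = β + ((s'+1:ℕ):ℝ) + (d:ℝ) := by
          have h := cconst_zero (x := β + ((s'+1:ℕ):ℝ) + (d:ℝ) - 1) (by linarith)
          rw [h]; ring
        have hhpos : 0 < hJac A' 0 q := by
          unfold hJac
          have h1 : 0 < poch (A' + 1) q := poch_pos hA'1 q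
          have h2 : 0 < poch ((0:ℝ) + 1) q := poch_pos (by norm_num) q
          have h3 : 0 < A' + 0 + (q:ℝ) + 1 := by linarith
          have h4 : (0:ℝ) < (q.factorial : ℝ) := by exact_mod_cast q.factorial_pos
          have h5 : 0 < poch (A' + 0 + 2) q := poch_pos (by linarith) q
          have h6 : 0 < A' + 0 + 2*(q:ℝ) + 1 := by linarith
          exact div_pos (mul_pos (mul_pos h1 h2) h3) (mul_pos (mul_pos h4 h5) h6)
        have hApos : 0 < jacobiA A' 0 q := by
          unfold jacobiA
          have : 0 < poch ((q:ℝ) + A' + 0 + 1) q := poch_pos (by linarith) q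
          positivity
        have hP1 : 0 < poch (β + ((s'+1:ℕ):ℝ) + (d:ℝ)) (2*m) := poch_pos hY0 _
        have hP2 : 0 < poch (β + ((s'+1:ℕ):ℝ) + 0 + (d:ℝ) + 1) (2*m) := by
          rw [show β + ((s'+1:ℕ):ℝ) + 0 + (d:ℝ) + 1 = β + ((s'+1:ℕ):ℝ) + (d:ℝ) + 1 from by ring]
          exact poch_pos (by linarith) _
        have hshift : (β + ((s'+1:ℕ):ℝ) + (d:ℝ)) * poch (β + ((s'+1:ℕ):ℝ) + 0 + (d:ℝ) + 1) (2*m)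
            = poch (β + ((s'+1:ℕ):ℝ) + (d:ℝ)) (2*m) * (A' + 1) := by
          rw [show β + ((s'+1:ℕ):ℝ) + 0 + (d:ℝ) + 1 = β + ((s'+1:ℕ):ℝ) + (d:ℝ) + 1 from by ring]
          rw [poch_shift]
          congr 1
          rw [hA'def]; push_cast; ring
        -- assemble
        have hRint : (∫ v in t..(1:ℝ), (v-t)^s'/(s'.factorial:ℝ) *
              (coneInner d (β+((s'+1:ℕ):ℝ)) 0 (pdT (s'+1) f)
                  (coneS d (β+((s'+1:ℕ):ℝ)) 0 (n-(s'+1)) m (Y m ℓ)) /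
                coneH d (β+((s'+1:ℕ):ℝ)) 0 (n-(s'+1)) m *
                coneS d (β+((s'+1:ℕ):ℝ)) 0 (n-(s'+1)) m (Y m ℓ) (x, v)))
            = (coneInner d (β+((s'+1:ℕ):ℝ)) 0 (pdT (s'+1) f)
                  (coneS d (β+((s'+1:ℕ):ℝ)) 0 (n-(s'+1)) m (Y m ℓ)) /
                coneH d (β+((s'+1:ℕ):ℝ)) 0 (n-(s'+1)) m * Y m ℓ x) *
              ∫ v in t..(1:ℝ), (v-t)^s'/(s'.factorial:ℝ) * jacobiP A' 0 q (1 - 2*v) := by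
          rw [intervalIntegral.integral_congr (g := fun v =>
            (coneInner d (β+((s'+1:ℕ):ℝ)) 0 (pdT (s'+1) f)
                  (coneS d (β+((s'+1:ℕ):ℝ)) 0 (n-(s'+1)) m (Y m ℓ)) /
                coneH d (β+((s'+1:ℕ):ℝ)) 0 (n-(s'+1)) m * Y m ℓ x) *
              ((v-t)^s'/(s'.factorial:ℝ) * jacobiP A' 0 q (1 - 2*v)))
            (fun v _ => by
              simp only [coneS,
                show 2*(m:ℝ) + (β+((s'+1:ℕ):ℝ)) + (d:ℝ) - 1 = A' from by rw [hA'def]; push_cast; ring,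
                show n - (s'+1) - m = q from by rw [hqdef]; omega]
              ring)]
          rw [intervalIntegral.integral_const_mul]
        rw [hRint, hInner, hHve, hval]
        unfold coneInner coneH
        rw [hccA, hccB]
        rw [show hJac (2*(m:ℝ) + (β+((s'+1:ℕ):ℝ)) + (d:ℝ) - 1) 0 (n - (s'+1) - m) = hJac A' 0 q
          from by rw [show 2*(m:ℝ) + (β+((s'+1:ℕ):ℝ)) + (d:ℝ) - 1 = A' from by rw [hA'def]; push_cast; ring,
            show n - (s'+1) - m = q from by rw [hqdef]; omega]]
        have hcoef : ∀ w K : ℝ, (-2:ℝ)^(s'+1) * jacobiA A' 0 q * w * K /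
              ((2:ℝ)^(2*(s'+1)) / (A'+1) * (jacobiA A' 0 q)^2 * hJac A' 0 q) * (2^(s'+1) * jacobiA A' 0 q)
            = (-1:ℝ)^(s'+1) * ((β + ((s'+1:ℕ):ℝ) + (d:ℝ)) * w * K /
                (poch (β + ((s'+1:ℕ):ℝ) + (d:ℝ)) (2*m) /
                  poch (β + ((s'+1:ℕ):ℝ) + 0 + (d:ℝ) + 1) (2*m) * hJac A' 0 q)) := by
          intro w K
          have hu : ((2:ℝ)^(s'+1)) ≠ 0 := by positivity
          have hA1 : (A' + 1) ≠ 0 := hA'1.ne'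
          have hh : hJac A' 0 q ≠ 0 := hhpos.ne'
          have hYne : (β + ((s'+1:ℕ):ℝ) + (d:ℝ)) ≠ 0 := hY0.ne'
          have hshift' : poch (β + ((s'+1:ℕ):ℝ) + (d:ℝ)) (2*m) /
                poch (β + ((s'+1:ℕ):ℝ) + 0 + (d:ℝ) + 1) (2*m)
              = (β + ((s'+1:ℕ):ℝ) + (d:ℝ)) / (A' + 1) := by
            rw [div_eq_div_iff hP2.ne' hA1]
            linear_combination -hshift
          rw [hshift']
          rw [show ((-2:ℝ))^(s'+1) = (-1:ℝ)^(s'+1) * 2^(s'+1) from by rw [← neg_one_mul, mul_pow],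
            show ((2:ℝ))^(2*(s'+1)) = 2^(s'+1) * 2^(s'+1) from by rw [two_mul, pow_add]]
          rw [show (2:ℝ)^(s'+1) * 2^(s'+1) / (A'+1) * (jacobiA A' 0 q)^2 * hJac A' 0 q
              = ((2:ℝ)^(s'+1) * 2^(s'+1) * (jacobiA A' 0 q)^2 * hJac A' 0 q)/(A'+1) from by ring]
          rw [show (β + ((s'+1:ℕ):ℝ) + (d:ℝ)) / (A' + 1) * hJac A' 0 q
              = ((β + ((s'+1:ℕ):ℝ) + (d:ℝ)) * hJac A' 0 q)/(A'+1) from by ring]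
          rw [div_div_eq_mul_div, div_div_eq_mul_div]
          rw [div_mul_eq_mul_div, ← mul_div_assoc]
          rw [div_eq_div_iff
            (mul_ne_zero (mul_ne_zero (mul_ne_zero hu hu) (pow_ne_zero 2 hApos.ne')) hh)
            (mul_ne_zero hYne hh)]
          ring
        linear_combination ((∫ v in t..(1:ℝ), (v-t)^s'/(s'.factorial:ℝ) * jacobiP A' 0 q (1 - 2*v)) *
          Y m ℓ x) * hcoef ((omegaS d)⁻¹)
            (coneInt d (fun p => pdT (s'+1) f p *
              coneS d (β+((s'+1:ℕ):ℝ)) 0 (n-(s'+1)) m (Y m ℓ) p *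
              p.2 ^ (β+((s'+1:ℕ):ℝ)) * (1 - p.2) ^ (0:ℝ)))
      have hcont : ∀ (m : ℕ) (ℓ : Fin (N m)), Continuous fun v : ℝ =>
          (v-t)^s'/(s'.factorial:ℝ) *
            (coneInner d (β+((s'+1:ℕ):ℝ)) 0 (pdT (s'+1) f)
                (coneS d (β+((s'+1:ℕ):ℝ)) 0 (n-(s'+1)) m (Y m ℓ)) /
              coneH d (β+((s'+1:ℕ):ℝ)) 0 (n-(s'+1)) m *
              coneS d (β+((s'+1:ℕ):ℝ)) 0 (n-(s'+1)) m (Y m ℓ) (x, v)) := by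
        intro m ℓ
        simp only [coneS]
        exact (((continuous_id.sub continuous_const).pow s').div_const _).mul
          (continuous_const.mul (((continuous_jacobiP _ _ _).comp
            (continuous_const.sub (continuous_const.mul continuous_id))).mul continuous_const))
      rw [Finset.sum_congr rfl (fun m hm => Finset.sum_congr rfl (fun ℓ _ =>
        hB m (by simp only [Finset.mem_range] at hm; omega) ℓ))]
      simp only [coneProj, show n - (s'+1) + 1 = n - s' from by omega, Finset.mul_sum]
      rw [intervalIntegral.integral_finset_sum (fun m _ =>
        (continuous_finset_sum _ fun ℓ _ => hcont m ℓ).intervalIntegrable _ _)]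
      rw [Finset.mul_sum]
      refine Finset.sum_congr rfl fun m hm => ?_
      rw [intervalIntegral.integral_finset_sum (fun ℓ _ => (hcont m ℓ).intervalIntegrable _ _),
        Finset.mul_sum]

end
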